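/- Let X, Y be finite subsets of ℝ^d, κ : X × Y → ℝ, and S₁ ⊆ X, S₂ ⊆ Y nonempty with r₁ = |S₁|, r₂ = |S₂|. Suppose L > 0 satisfies |κ(x,y) - κ(u,v)|² ≤ L²(|x-u|² + |y-v|²) for all (x,y) ∈ X × Y and (u,v) ∈ S₁ × S₂; L₁ > 0 satisfies |κ(x,y) - κ(u,y)| ≤ L₁ |x-u| for all x ∈ X, u ∈ S₁, y ∈ S₂; and L₂ > 0 satisfies |κ(x,y) - κ(x,v)| ≤ L₂ |y-v| for all x ∈ S₁, y ∈ Y, v ∈ S₂. Define δ₁ = max_{x∈X} dist(x, S₁) and δ₂ = max_{y∈Y} dist(y, S₂). Then ‖K_{XY} - K_{XS₂} K_{S₁S₂}⁺ K_{S₁Y}‖_max ≤ C₁ δ₁ + C₂ δ₂ + C₃ δ₁ δ₂ with C₁ = L + √r₂ L₁, C₂ = L + √r₁ L₂, and C₃ = ‖K_{S₁S₂}⁺‖₂ √(r₁ r₂) L₁ L₂. -/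

import Mathlib

open Matrix

/-- Euclidean norm of a vector. -/
noncomputable def evnorm {n : Type*} [Fintype n] (v : n → ℝ) : ℝ :=
  ‖(WithLp.equiv 2 (n → ℝ)).symm v‖

/-- Operator 2-norm of a real matrix (induced by Euclidean norms). -/
noncomputable def opNorm {m n : Type*} [Fintype m] [Fintype n] (A : Matrix m n ℝ) : ℝ :=
  letI := Classical.decEq n
  ‖LinearMap.toContinuousLinearMap (Matrix.toEuclideanLin A)‖

/-- The four Penrose conditions: `P` is the Moore–Penrose pseudoinverse of `A`. -/
def IsMoorePenrose {m n : Type*} [Fintype m] [Fintype n]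
    (A : Matrix m n ℝ) (P : Matrix n m ℝ) : Prop :=
  A * P * A = A ∧ P * A * P = P ∧ (A * P)ᵀ = A * P ∧ (P * A)ᵀ = P * A

/-- Entrywise max norm of a matrix. -/
noncomputable def maxNorm {m n : Type*} [Fintype m] [Fintype n] (A : Matrix m n ℝ) : ℝ :=
  ⨆ i, ⨆ j, |A i j|

lemma evnorm_nonneg' {n : Type*} [Fintype n] (v : n → ℝ) : 0 ≤ evnorm v := norm_nonneg _

lemma opNorm_nonneg' {m n : Type*} [Fintype m] [Fintype n] (A : Matrix m n ℝ) : 0 ≤ opNorm A :=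
  norm_nonneg _

lemma evnorm_sq' {n : Type*} [Fintype n] (v : n → ℝ) : evnorm v ^ 2 = v ⬝ᵥ v := by
  rw [evnorm, ← real_inner_self_eq_norm_sq]
  simp [PiLp.inner_apply, RCLike.inner_apply, dotProduct]
  rw [EuclideanSpace.norm_eq, Real.sq_sqrt (by positivity)]; simp [sq]

lemma abs_dot_le' {n : Type*} [Fintype n] (u v : n → ℝ) : |u ⬝ᵥ v| ≤ evnorm u * evnorm v := by
  have h := abs_real_inner_le_norm ((WithLp.equiv 2 (n → ℝ)).symm u)
    ((WithLp.equiv 2 (n → ℝ)).symm v)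
  simpa [evnorm, PiLp.inner_apply, RCLike.inner_apply, dotProduct, mul_comm] using h

lemma abs_apply_le_evnorm' {n : Type*} [Fintype n] (v : n → ℝ) (i : n) : |v i| ≤ evnorm v := by
  have key : ‖v i‖ ^ 2 ≤ ∑ j, ‖v j‖ ^ 2 :=
    Finset.single_le_sum (f := fun j => ‖v j‖ ^ 2) (fun j _ => by positivity) (Finset.mem_univ i)
  have h2 : |v i| ≤ Real.sqrt (∑ j, ‖v j‖ ^ 2) := by
    rw [← Real.sqrt_sq_eq_abs]
    exact Real.sqrt_le_sqrt (by simpa [Real.norm_eq_abs, sq_abs] using key)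
  simpa [evnorm, EuclideanSpace.norm_eq] using h2

lemma evnorm_le_card' {n : Type*} [Fintype n] (v : n → ℝ) (c : ℝ) (hc : 0 ≤ c)
    (h : ∀ i, |v i| ≤ c) : evnorm v ≤ Real.sqrt (Fintype.card n) * c := by
  have h1 : evnorm v ^ 2 ≤ (Fintype.card n : ℝ) * c ^ 2 := by
    rw [evnorm_sq']
    calc v ⬝ᵥ v = ∑ i, v i * v i := rfl
      _ ≤ ∑ _i : n, c ^ 2 := Finset.sum_le_sum fun i _ => by
          nlinarith [h i, abs_nonneg (v i), sq_abs (v i)]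
      _ = (Fintype.card n : ℝ) * c ^ 2 := by simp [Finset.sum_const, nsmul_eq_mul]
  calc evnorm v = Real.sqrt (evnorm v ^ 2) := (Real.sqrt_sq (evnorm_nonneg' v)).symm
    _ ≤ Real.sqrt ((Fintype.card n : ℝ) * c ^ 2) := Real.sqrt_le_sqrt h1
    _ = Real.sqrt (Fintype.card n) * c := by
        rw [Real.sqrt_mul (by positivity), Real.sqrt_sq hc]

lemma evnorm_mulVec_le' {m n : Type*} [Fintype m] [Fintype n] (A : Matrix m n ℝ) (v : n → ℝ) :
    evnorm (A.mulVec v) ≤ opNorm A * evnorm v := by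
  letI := Classical.decEq n
  have h := (LinearMap.toContinuousLinearMap (Matrix.toEuclideanLin A)).le_opNorm
    ((WithLp.equiv 2 (n → ℝ)).symm v)
  simpa [evnorm, opNorm, Matrix.toEuclideanLin_apply_piLp_toLp] using h

lemma evnorm_mulVec_le_one' {n : Type*} [Fintype n] (M : Matrix n n ℝ)
    (hs : Mᵀ = M) (hi : M * M = M) (w : n → ℝ) :
    evnorm (M.mulVec w) ≤ evnorm w := by
  set s := M.mulVec w with hsdef
  have h1 : s = w ᵥ* M := by
    rw [hsdef, ← hs, Matrix.mulVec_transpose, hs]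
  have key : s ⬝ᵥ s = w ⬝ᵥ s := by
    calc s ⬝ᵥ s = (w ᵥ* M) ⬝ᵥ s := by rw [← h1]
      _ = w ⬝ᵥ (M *ᵥ s) := (Matrix.dotProduct_mulVec w M s).symm
      _ = w ⬝ᵥ s := by rw [hsdef, Matrix.mulVec_mulVec, hi]
  have h2 : evnorm s ^ 2 ≤ evnorm w * evnorm s := by
    rw [evnorm_sq', key]
    exact le_trans (le_abs_self _) (abs_dot_le' _ _)
  rcases eq_or_lt_of_le (evnorm_nonneg' s) with h0 | h0
  · rw [← h0]; exact evnorm_nonneg' w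
  · nlinarith

set_option maxHeartbeats 1000000 in
lemma stmt7_key {d : ℕ} (X Y : Finset (EuclideanSpace ℝ (Fin d)))
    (κ : EuclideanSpace ℝ (Fin d) → EuclideanSpace ℝ (Fin d) → ℝ)
    (S₁ S₂ : Finset (EuclideanSpace ℝ (Fin d)))
    (hX : X.Nonempty) (hY : Y.Nonempty) (hS₁ : S₁.Nonempty) (hS₂ : S₂.Nonempty)
    (r₁ r₂ : ℕ) (hr₁ : r₁ = S₁.card) (hr₂ : r₂ = S₂.card)
    (L L₁ L₂ : ℝ) (hL : 0 < L) (hL₁ : 0 < L₁) (hL₂ : 0 < L₂)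
    (hLip : ∀ x ∈ X, ∀ y ∈ Y, ∀ u ∈ S₁, ∀ v ∈ S₂,
      |κ x y - κ u v| ^ 2 ≤ L ^ 2 * (dist x u ^ 2 + dist y v ^ 2))
    (hLip₁ : ∀ x ∈ X, ∀ u ∈ S₁, ∀ y ∈ S₂, |κ x y - κ u y| ≤ L₁ * dist x u)
    (hLip₂ : ∀ x ∈ S₁, ∀ y ∈ Y, ∀ v ∈ S₂, |κ x y - κ x v| ≤ L₂ * dist y v)
    (δ₁ δ₂ : ℝ)
    (hδ₁ : δ₁ = X.sup' hX fun x => S₁.inf' hS₁ fun u => dist x u)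
    (hδ₂ : δ₂ = Y.sup' hY fun y => S₂.inf' hS₂ fun v => dist y v)
    (P : Matrix S₂ S₁ ℝ)
    (hP : IsMoorePenrose (Matrix.of fun (u : S₁) (v : S₂) => κ u v) P)
    (x : {x // x ∈ X}) (y : {y // y ∈ Y}) :
      |((Matrix.of fun (x : X) (y : Y) => κ x y)
        - (Matrix.of fun (x : X) (v : S₂) => κ x v) * P
            * (Matrix.of fun (u : S₁) (y : Y) => κ u y)) x y| ≤
      (L + Real.sqrt r₂ * L₁) * δ₁ + (L + Real.sqrt r₁ * L₂) * δ₂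
        + opNorm P * Real.sqrt (r₁ * r₂) * L₁ * L₂ * (δ₁ * δ₂) := by
  classical
  set K : Matrix S₁ S₂ ℝ := Matrix.of fun (u : S₁) (v : S₂) => κ u v with hKdef
  obtain ⟨hP1, hP2, hP3, hP4⟩ := hP
  have hδ₁0 : 0 ≤ δ₁ := by
    rw [hδ₁]
    exact le_trans (Finset.le_inf' hS₁ (fun u => dist (x:EuclideanSpace ℝ (Fin d)) u)
      fun u _ => dist_nonneg)
      (Finset.le_sup' (fun x => S₁.inf' hS₁ fun u => dist x u) x.2)
  have hδ₂0 : 0 ≤ δ₂ := by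
    rw [hδ₂]
    exact le_trans (Finset.le_inf' hS₂ (fun v => dist (y:EuclideanSpace ℝ (Fin d)) v)
      fun v _ => dist_nonneg)
      (Finset.le_sup' (fun y => S₂.inf' hS₂ fun v => dist y v) y.2)
  -- nearest points
  obtain ⟨u₀, hu₀, hu₀e⟩ := S₁.exists_mem_eq_inf' hS₁ (fun u => dist (x : EuclideanSpace ℝ (Fin d)) u)
  have hxu : dist (x : EuclideanSpace ℝ (Fin d)) u₀ ≤ δ₁ := by
    rw [← hu₀e, hδ₁]; exact Finset.le_sup' (fun x => S₁.inf' hS₁ fun u => dist x u) x.2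
  obtain ⟨v₀, hv₀, hv₀e⟩ := S₂.exists_mem_eq_inf' hS₂ (fun v => dist (y : EuclideanSpace ℝ (Fin d)) v)
  have hyv : dist (y : EuclideanSpace ℝ (Fin d)) v₀ ≤ δ₂ := by
    rw [← hv₀e, hδ₂]; exact Finset.le_sup' (fun y => S₂.inf' hS₂ fun v => dist y v) y.2
  set u' : {u // u ∈ S₁} := ⟨u₀, hu₀⟩
  set v' : {v // v ∈ S₂} := ⟨v₀, hv₀⟩
  set rowx : {v // v ∈ S₂} → ℝ := fun v => κ x v with hrowx
  set coly : {u // u ∈ S₁} → ℝ := fun u => κ u y with hcoly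
  set a : {v // v ∈ S₂} → ℝ := fun v => κ x v - κ u₀ v with ha
  set b : {u // u ∈ S₁} → ℝ := fun u => κ u y - κ u v₀ with hb
  have hentry : ((Matrix.of fun (x : X) (v : S₂) => κ x v) * P
          * (Matrix.of fun (u : S₁) (y : Y) => κ u y)) x y
        = rowx ⬝ᵥ (P *ᵥ coly) := by
    rw [Matrix.mul_assoc, Matrix.mul_apply]
    simp only [Matrix.mul_apply, Matrix.of_apply, dotProduct, Matrix.mulVec, hrowx, hcoly]
  have hrow : rowx = (fun v : {v // v ∈ S₂} => K u' v) + a := by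
    funext v; simp [hrowx, ha, hKdef, u']
  have hcol : coly = (fun u : {u // u ∈ S₁} => K u v') + b := by
    funext u; simp [hcoly, hb, hKdef, v']
  -- four terms
  have hdec : rowx ⬝ᵥ (P *ᵥ coly)
      = κ u₀ v₀ + ((K * P) *ᵥ b) u' + ((P * K) *ᵥ a) v' + a ⬝ᵥ (P *ᵥ b) := by
    have t1 : (fun v : {v // v ∈ S₂} => K u' v) ⬝ᵥ (P *ᵥ (fun u : {u // u ∈ S₁} => K u v'))
        = κ u₀ v₀ := by
      have : (fun v : {v // v ∈ S₂} => K u' v) ⬝ᵥ (P *ᵥ (fun u : {u // u ∈ S₁} => K u v'))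
          = (K * (P * K)) u' v' := rfl
      rw [this, ← Matrix.mul_assoc, hP1]; rfl
    have t2 : (fun v : {v // v ∈ S₂} => K u' v) ⬝ᵥ (P *ᵥ b) = ((K * P) *ᵥ b) u' := by
      have : (fun v : {v // v ∈ S₂} => K u' v) ⬝ᵥ (P *ᵥ b) = (K *ᵥ (P *ᵥ b)) u' := rfl
      rw [this, Matrix.mulVec_mulVec]
    have t3 : a ⬝ᵥ (P *ᵥ (fun u : {u // u ∈ S₁} => K u v')) = ((P * K) *ᵥ a) v' := by
      rw [Matrix.dotProduct_mulVec]
      have : (a ᵥ* P) ⬝ᵥ (fun u : {u // u ∈ S₁} => K u v') = ((a ᵥ* P) ᵥ* K) v' := rfl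
      rw [this, Matrix.vecMul_vecMul]
      conv_lhs => rw [← hP4, Matrix.vecMul_transpose]
    rw [hrow, hcol, Matrix.mulVec_add, add_dotProduct, dotProduct_add,
      dotProduct_add, t1, t2, t3]
    ring
  -- bounds on a and b
  have haB : ∀ v : {v // v ∈ S₂}, |a v| ≤ L₁ * δ₁ := by
    intro v
    refine le_trans (hLip₁ x x.2 u₀ hu₀ v v.2) ?_
    exact mul_le_mul_of_nonneg_left hxu hL₁.le
  have hbB : ∀ u : {u // u ∈ S₁}, |b u| ≤ L₂ * δ₂ := by
    intro u
    refine le_trans (hLip₂ u u.2 y y.2 v₀ hv₀) ?_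
    exact mul_le_mul_of_nonneg_left hyv hL₂.le
  have haN : evnorm a ≤ Real.sqrt r₂ * (L₁ * δ₁) := by
    have := evnorm_le_card' a (L₁ * δ₁) (by positivity) haB
    rwa [Fintype.card_coe, ← hr₂] at this
  have hbN : evnorm b ≤ Real.sqrt r₁ * (L₂ * δ₂) := by
    have := evnorm_le_card' b (L₂ * δ₂) (by positivity) hbB
    rwa [Fintype.card_coe, ← hr₁] at this
  -- symmetric idempotent contractions
  have hKP : (K * P) * (K * P) = K * P := by
    conv_lhs => rw [← Matrix.mul_assoc, hP1]
  have hPK : (P * K) * (P * K) = P * K := by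
    conv_lhs => rw [← Matrix.mul_assoc, hP2]
  have hT2 : |((K * P) *ᵥ b) u'| ≤ evnorm b :=
    le_trans (abs_apply_le_evnorm' _ _) (evnorm_mulVec_le_one' _ hP3 hKP b)
  have hT3 : |((P * K) *ᵥ a) v'| ≤ evnorm a :=
    le_trans (abs_apply_le_evnorm' _ _) (evnorm_mulVec_le_one' _ hP4 hPK a)
  have hT4 : |a ⬝ᵥ (P *ᵥ b)| ≤ evnorm a * (opNorm P * evnorm b) :=
    le_trans (abs_dot_le' _ _)
      (mul_le_mul_of_nonneg_left (evnorm_mulVec_le' P b) (evnorm_nonneg' a))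
  -- L term
  have hT1 : |κ x y - κ u₀ v₀| ≤ L * δ₁ + L * δ₂ := by
    have h1 := hLip x x.2 y y.2 u₀ hu₀ v₀ hv₀
    have h2 : |κ (x:EuclideanSpace ℝ (Fin d)) y - κ u₀ v₀| ^ 2 ≤ (L * δ₁ + L * δ₂) ^ 2 := by
      have hd1 : dist (x:EuclideanSpace ℝ (Fin d)) u₀ ^ 2 ≤ δ₁ ^ 2 := by
        nlinarith [dist_nonneg (x := (x:EuclideanSpace ℝ (Fin d))) (y := u₀), hxu]
      have hd2 : dist (y:EuclideanSpace ℝ (Fin d)) v₀ ^ 2 ≤ δ₂ ^ 2 := by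
        nlinarith [dist_nonneg (x := (y:EuclideanSpace ℝ (Fin d))) (y := v₀), hyv]
      nlinarith [h1, hd1, hd2, sq_nonneg L, hL.le, mul_nonneg hδ₁0 hδ₂0,
        mul_nonneg (mul_nonneg hL.le hL.le) (mul_nonneg hδ₁0 hδ₂0)]
    have h3 := Real.sqrt_le_sqrt h2
    rwa [Real.sqrt_sq_eq_abs, Real.sqrt_sq_eq_abs, abs_abs,
      abs_of_nonneg (by positivity : (0:ℝ) ≤ L * δ₁ + L * δ₂)] at h3
  -- assemble
  have hE : ((Matrix.of fun (x : X) (y : Y) => κ x y)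
      - (Matrix.of fun (x : X) (v : S₂) => κ x v) * P
          * (Matrix.of fun (u : S₁) (y : Y) => κ u y)) x y
      = (κ x y - κ u₀ v₀) - ((K * P) *ᵥ b) u' - ((P * K) *ᵥ a) v' - a ⬝ᵥ (P *ᵥ b) := by
    rw [Matrix.sub_apply, hentry, hdec]; simp; ring
  rw [hE]
  have habs : |(κ (x:EuclideanSpace ℝ (Fin d)) y - κ u₀ v₀) - ((K * P) *ᵥ b) u'
        - ((P * K) *ᵥ a) v' - a ⬝ᵥ (P *ᵥ b)|
      ≤ (L * δ₁ + L * δ₂) + evnorm b + evnorm a + evnorm a * (opNorm P * evnorm b) := by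
    calc _ ≤ |(κ (x:EuclideanSpace ℝ (Fin d)) y - κ u₀ v₀) - ((K * P) *ᵥ b) u'
        - ((P * K) *ᵥ a) v'| + |a ⬝ᵥ (P *ᵥ b)| := abs_sub _ _
      _ ≤ |(κ (x:EuclideanSpace ℝ (Fin d)) y - κ u₀ v₀) - ((K * P) *ᵥ b) u'|
          + |((P * K) *ᵥ a) v'| + |a ⬝ᵥ (P *ᵥ b)| := by
            gcongr; exact abs_sub _ _
      _ ≤ |κ (x:EuclideanSpace ℝ (Fin d)) y - κ u₀ v₀| + |((K * P) *ᵥ b) u'|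
          + |((P * K) *ᵥ a) v'| + |a ⬝ᵥ (P *ᵥ b)| := by
            gcongr; exact abs_sub _ _
      _ ≤ _ := by
            have := hT1; have := hT2; have := hT3; have := hT4; linarith
  refine le_trans habs ?_
  have hsq : Real.sqrt ((r₁ : ℝ) * r₂) = Real.sqrt r₁ * Real.sqrt r₂ :=
    Real.sqrt_mul (by positivity) _
  have hP0 := opNorm_nonneg' P
  have h4 : evnorm a * (opNorm P * evnorm b)
      ≤ (Real.sqrt r₂ * (L₁ * δ₁)) * (opNorm P * (Real.sqrt r₁ * (L₂ * δ₂))) := by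
    have hb0 := evnorm_nonneg' b
    have ha0 := evnorm_nonneg' a
    refine mul_le_mul haN (mul_le_mul_of_nonneg_left hbN hP0) (by positivity) (by positivity)
  rw [hsq]
  nlinarith [haN, hbN, evnorm_nonneg' a, evnorm_nonneg' b, h4]



theorem stmt7 {d : ℕ} (X Y : Finset (EuclideanSpace ℝ (Fin d)))
    (κ : EuclideanSpace ℝ (Fin d) → EuclideanSpace ℝ (Fin d) → ℝ)
    (S₁ S₂ : Finset (EuclideanSpace ℝ (Fin d))) (hS₁X : S₁ ⊆ X) (hS₂Y : S₂ ⊆ Y)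
    (hX : X.Nonempty) (hY : Y.Nonempty) (hS₁ : S₁.Nonempty) (hS₂ : S₂.Nonempty)
    (r₁ r₂ : ℕ) (hr₁ : r₁ = S₁.card) (hr₂ : r₂ = S₂.card)
    (L L₁ L₂ : ℝ) (hL : 0 < L) (hL₁ : 0 < L₁) (hL₂ : 0 < L₂)
    (hLip : ∀ x ∈ X, ∀ y ∈ Y, ∀ u ∈ S₁, ∀ v ∈ S₂,
      |κ x y - κ u v| ^ 2 ≤ L ^ 2 * (dist x u ^ 2 + dist y v ^ 2))
    (hLip₁ : ∀ x ∈ X, ∀ u ∈ S₁, ∀ y ∈ S₂, |κ x y - κ u y| ≤ L₁ * dist x u)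
    (hLip₂ : ∀ x ∈ S₁, ∀ y ∈ Y, ∀ v ∈ S₂, |κ x y - κ x v| ≤ L₂ * dist y v)
    (δ₁ δ₂ : ℝ)
    (hδ₁ : δ₁ = X.sup' hX fun x => S₁.inf' hS₁ fun u => dist x u)
    (hδ₂ : δ₂ = Y.sup' hY fun y => S₂.inf' hS₂ fun v => dist y v)
    (P : Matrix S₂ S₁ ℝ)
    (hP : IsMoorePenrose (Matrix.of fun (u : S₁) (v : S₂) => κ u v) P)
    (hK : (Matrix.of fun (u : S₁) (v : S₂) => κ u v) ≠ 0) :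
    maxNorm ((Matrix.of fun (x : X) (y : Y) => κ x y)
        - (Matrix.of fun (x : X) (v : S₂) => κ x v) * P
            * (Matrix.of fun (u : S₁) (y : Y) => κ u y)) ≤
      (L + Real.sqrt r₂ * L₁) * δ₁ + (L + Real.sqrt r₁ * L₂) * δ₂
        + opNorm P * Real.sqrt (r₁ * r₂) * L₁ * L₂ * (δ₁ * δ₂) := by
  classical
  obtain ⟨x0, hx0⟩ := hX
  obtain ⟨y0, hy0⟩ := hY
  haveI : Nonempty {x // x ∈ X} := ⟨⟨x0, hx0⟩⟩
  haveI : Nonempty {y // y ∈ Y} := ⟨⟨y0, hy0⟩⟩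
  unfold maxNorm
  exact ciSup_le fun x => ciSup_le fun y =>
    stmt7_key X Y κ S₁ S₂ ⟨x0, hx0⟩ ⟨y0, hy0⟩ hS₁ hS₂ r₁ r₂ hr₁ hr₂ L L₁ L₂ hL hL₁ hL₂
      hLip hLip₁ hLip₂ δ₁ δ₂ hδ₁ hδ₂ P hP x y
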